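/- (Oort–Peters intersection C1·C2 = 2(P2+P3+P4+P5) + ∞.) The set of common zeros of C1 and C2 in ℙ²(ℂ) is exactly {P2, P3, P4, P5, ∞}. At each of P2, P3, P4, P5 the gradient vectors of C1 and C2 are both nonzero and proportional (the two cubics are tangent there), while at ∞ = [0:1:0] the gradients ∇C1(0,1,0) and ∇C2(0,1,0) are not proportional (the cubics meet transversally at ∞). -/

import Mathlib

noncomputable section

open MvPolynomial

/-- The polynomial ring `ℂ[x,y,z]`. -/
abbrev R3 : Type := MvPolynomial (Fin 3) ℂ

def x : R3 := X 0
def y : R3 := X 1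
def z : R3 := X 2

/-- The Oort–Peters conic `Q1 = y² + 2x² − 2xy − 5xz + 2yz + 3z²`. -/
def Q1 : R3 := y^2 + 2*x^2 - 2*x*y - 5*x*z + 2*y*z + 3*z^2
/-- The Oort–Peters conic `Q2 = y² + 2x² + 2xy − 5xz − 2yz + 3z²`. -/
def Q2 : R3 := y^2 + 2*x^2 + 2*x*y - 5*x*z - 2*y*z + 3*z^2
/-- The Oort–Peters cubic `C1 = y²z + x³ − 4x²z + 3xz²`. -/
def C1 : R3 := y^2*z + x^3 - 4*x^2*z + 3*x*z^2
/-- The Oort–Peters cubic `C2 = 2y²z − xy² + 4x²z − 12xz² + 9z³`. -/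
def C2 : R3 := 2*y^2*z - x*y^2 + 4*x^2*z - 12*x*z^2 + 9*z^3

/-- `i√3`. -/
def s3 : ℂ := Complex.I * Real.sqrt 3

/-- Coordinate representative of `P = [3:0:2]` (i.e. `[3/2:0:1]`). -/
def P : Fin 3 → ℂ := ![3, 0, 2]
/-- Coordinate representative of `P1 = [1:0:1]`. -/
def P1 : Fin 3 → ℂ := ![1, 0, 1]
/-- Coordinate representative of `P2 = [3+i√3 : 3+i√3 : 2]`. -/
def P2 : Fin 3 → ℂ := ![3+s3, 3+s3, 2]
/-- Coordinate representative of `P3 = [3−i√3 : 3−i√3 : 2]`. -/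
def P3 : Fin 3 → ℂ := ![3-s3, 3-s3, 2]
/-- Coordinate representative of `P4 = [3+i√3 : −3−i√3 : 2]`. -/
def P4 : Fin 3 → ℂ := ![3+s3, -3-s3, 2]
/-- Coordinate representative of `P5 = [3−i√3 : −3+i√3 : 2]`. -/
def P5 : Fin 3 → ℂ := ![3-s3, -3+s3, 2]
/-- Coordinate representative of `∞ = [0:1:0]`. -/
def Pinf : Fin 3 → ℂ := ![0, 1, 0]

/-- The gradient vector of `G` at the point `v ∈ ℂ³`. -/
def grad (G : R3) (v : Fin 3 → ℂ) : Fin 3 → ℂ := fun i => eval v (pderiv i G)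

/-- The common zero locus of `G` and `H` in `ℙ²(ℂ)` is exactly the set of points with
coordinate representatives in the list `reps`. -/
def CommonZerosExactly (G H : R3) (reps : List (Fin 3 → ℂ)) : Prop :=
  (∀ w ∈ reps, eval w G = 0 ∧ eval w H = 0) ∧
  ∀ v : Fin 3 → ℂ, v ≠ 0 → eval v G = 0 → eval v H = 0 →
    ∃ t : ℂ, t ≠ 0 ∧ ∃ w ∈ reps, v = t • w

/-- The curves `{G = 0}` and `{H = 0}` are tangent at the point with representative
`v`: both gradients are nonzero and they are proportional. -/
def TangentAt (G H : R3) (v : Fin 3 → ℂ) : Prop :=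
  grad G v ≠ 0 ∧ grad H v ≠ 0 ∧ ∃ t : ℂ, t ≠ 0 ∧ grad H v = t • grad G v


/-! The pencil spanned by the two cubics contains a double conic:
`z·C2 − (2z − x)·C1 = q²` with `q = x² − 3xz + 3z²`, while `C1 = z(y² − x²) + x·q`.
So an affine common zero lies on `q = 0` and on the line pair `y = ±x`; these are the four
points `[a : ±a : 2]` with `a² − 6a + 12 = 0`, i.e. `a = 3 ± i√3`. On the line `z = 0` the cubic
`C1` reduces to `x³`, which leaves only `∞`. At the four points an explicit computation shows the
gradients to be proportional, as the double conic in the pencil predicts. -/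

def q : R3 := x^2 - 3*x*z + 3*z^2

lemma C1_eq : C1 = z * (y^2 - x^2) + x * q := by
  simp only [C1, q]; ring

lemma z_mul_C2_sub : z * C2 - (2*z - x) * C1 = q^2 := by
  simp only [C1, C2, q]; ring

section Evaluation

variable (v : Fin 3 → ℂ)

@[simp] lemma eval_x : eval v x = v 0 := eval_X _
@[simp] lemma eval_y : eval v y = v 1 := eval_X _
@[simp] lemma eval_z : eval v z = v 2 := eval_X _

lemma eval_q : eval v q = v 0 ^ 2 - 3 * v 0 * v 2 + 3 * v 2 ^ 2 := by
  simp [q]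

lemma grad_C1 : grad C1 v =
    ![3*(v 0)^2 - 8*(v 0)*(v 2) + 3*(v 2)^2, 2*(v 1)*(v 2),
      (v 1)^2 - 4*(v 0)^2 + 6*(v 0)*(v 2)] := by
  funext i; fin_cases i <;>
    simp only [Fin.zero_eta, Fin.mk_one, Fin.reduceFinMk, grad, C1, x, y, z,
      ← map_ofNat (C : ℂ →+* R3), map_add, map_sub, map_mul, map_pow, map_zero, map_one,
      Derivation.leibniz, Derivation.leibniz_pow, derivation_C, pderiv_X, Pi.single_apply,
      Fin.reduceEq, ↓reduceIte, smul_eq_mul, nsmul_eq_mul, Nat.cast_ofNat, eval_X, eval_C,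
      Matrix.cons_val_zero, Matrix.cons_val_one, Matrix.cons_val] <;> ring

lemma grad_C2 : grad C2 v =
    ![-(v 1)^2 + 8*(v 0)*(v 2) - 12*(v 2)^2, 4*(v 1)*(v 2) - 2*(v 0)*(v 1),
      2*(v 1)^2 + 4*(v 0)^2 - 24*(v 0)*(v 2) + 27*(v 2)^2] := by
  funext i; fin_cases i <;>
    simp only [Fin.zero_eta, Fin.mk_one, Fin.reduceFinMk, grad, C2, x, y, z,
      ← map_ofNat (C : ℂ →+* R3), map_add, map_sub, map_mul, map_pow, map_zero, map_one,
      Derivation.leibniz, Derivation.leibniz_pow, derivation_C, pderiv_X, Pi.single_apply,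
      Fin.reduceEq, ↓reduceIte, smul_eq_mul, nsmul_eq_mul, Nat.cast_ofNat, eval_X, eval_C,
      Matrix.cons_val_zero, Matrix.cons_val_one, Matrix.cons_val] <;> ring

end Evaluation

lemma s3_sq : s3 ^ 2 = -3 := by
  rw [s3, mul_pow, Complex.I_sq, ← Complex.ofReal_pow, Real.sq_sqrt (by norm_num)]
  push_cast; ring

def IsTangencyPoint (w : Fin 3 → ℂ) : Prop :=
  ∃ a b : ℂ, a^2 - 6*a + 12 = 0 ∧ b^2 = a^2 ∧ w = ![a, b, 2]

namespace IsTangencyPoint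

variable {w : Fin 3 → ℂ}

lemma eval_C1 (hw : IsTangencyPoint w) : eval w C1 = 0 := by
  obtain ⟨a, b, ha, hb, rfl⟩ := hw
  rw [C1_eq]
  simp only [map_add, map_mul, map_sub, map_pow, eval_x, eval_y, eval_z, eval_q,
    Matrix.cons_val_zero, Matrix.cons_val_one, Matrix.cons_val]
  linear_combination 2*hb + a*ha

lemma eval_C2 (hw : IsTangencyPoint w) : eval w C2 = 0 := by
  have h := congrArg (eval w) z_mul_C2_sub
  obtain ⟨a, b, ha, hb, rfl⟩ := hw
  simp only [map_sub, map_mul, map_pow, eval_x, eval_z, eval_q, eval_ofNat,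
    eval_C1 ⟨a, b, ha, hb, rfl⟩, mul_zero, sub_zero, Matrix.cons_val_zero, Matrix.cons_val] at h
  linear_combination h/2 + (a^2 - 6*a + 12)/2 * ha

lemma tangentAt (hw : IsTangencyPoint w) : TangentAt C1 C2 w := by
  obtain ⟨a, b, ha, hb, rfl⟩ := hw
  have hb0 : b ≠ 0 := by
    rintro rfl
    obtain rfl : a = 0 := by simpa using hb.symm
    norm_num at ha
  have ht : (4 - a) / 2 ≠ 0 := by
    intro h
    obtain rfl : a = 4 := by linear_combination -2*h
    norm_num at ha
  have hg : grad C1 ![a, b, 2] ≠ 0 := fun h => hb0 (by simpa [grad_C1] using congrFun h 1)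
  -- on `a² − 6a + 12 = 0`, `(4 − a)/2 = (6 − a)/a` is the ratio of the `y`-components
  have hgrad : grad C2 ![a, b, 2] = ((4 - a) / 2) • grad C1 ![a, b, 2] := by
    funext i; fin_cases i <;>
      simp only [Fin.zero_eta, Fin.mk_one, Fin.reduceFinMk, grad_C1, grad_C2, Pi.smul_apply,
        smul_eq_mul, Matrix.cons_val_zero, Matrix.cons_val_one, Matrix.cons_val]
    · linear_combination (3/2*a - 6)*ha - hb
    · ring
    · linear_combination (9 - 3/2*a)*ha + a/2*hb
  exact ⟨hg, hgrad ▸ smul_ne_zero ht hg, _, ht, hgrad⟩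

end IsTangencyPoint

lemma isTangencyPoint_iff {w : Fin 3 → ℂ} : IsTangencyPoint w ↔ w ∈ [P2, P3, P4, P5] := by
  constructor
  · rintro ⟨a, b, ha, hb, rfl⟩
    have hroots : (a - (3 + s3)) * (a - (3 - s3)) = 0 := by linear_combination ha - s3_sq
    obtain rfl | rfl : a = 3 + s3 ∨ a = 3 - s3 := by simpa [sub_eq_zero] using hroots
    all_goals obtain rfl | rfl := sq_eq_sq_iff_eq_or_eq_neg.mp hb
    · simp [P2]
    · simp [P4, sub_eq_add_neg, add_comm]
    · simp [P3]
    · simp [P5, sub_eq_add_neg, add_comm]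
  · simp only [List.mem_cons, List.not_mem_nil, or_false]
    rintro (rfl | rfl | rfl | rfl)
    · exact ⟨3 + s3, 3 + s3, by linear_combination s3_sq, rfl, rfl⟩
    · exact ⟨3 - s3, 3 - s3, by linear_combination s3_sq, rfl, rfl⟩
    · exact ⟨3 + s3, -3 - s3, by linear_combination s3_sq, by ring, rfl⟩
    · exact ⟨3 - s3, -3 + s3, by linear_combination s3_sq, by ring, rfl⟩

lemma exists_isTangencyPoint_eq_smul {v : Fin 3 → ℂ} (hz : v 2 ≠ 0) (h1 : eval v C1 = 0)
    (h2 : eval v C2 = 0) : ∃ w, IsTangencyPoint w ∧ v = (v 2 / 2) • w := by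
  have hq : eval v q = 0 := by
    have h := congrArg (eval v) z_mul_C2_sub
    simpa [h1, h2] using h.symm
  have hyx : v 1 ^ 2 = v 0 ^ 2 := by
    have h := congrArg (eval v) C1_eq
    simp only [map_add, map_mul, map_sub, map_pow, eval_x, eval_y, eval_z, h1, hq, mul_zero,
      add_zero] at h
    linear_combination (mul_eq_zero.mp h.symm).resolve_left hz
  rw [eval_q] at hq
  refine ⟨_, ⟨2 * v 0 / v 2, 2 * v 1 / v 2, ?_, ?_, rfl⟩, ?_⟩
  · field_simp; linear_combination 4 * hq
  · rw [div_pow, div_pow, mul_pow, mul_pow, hyx]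
  · funext i; fin_cases i <;>
      simp only [Fin.zero_eta, Fin.mk_one, Fin.reduceFinMk, Pi.smul_apply, smul_eq_mul,
        Matrix.cons_val_zero, Matrix.cons_val_one, Matrix.cons_val] <;> field_simp

lemma eq_smul_Pinf {v : Fin 3 → ℂ} (hv : v ≠ 0) (hz : v 2 = 0) (h1 : eval v C1 = 0) :
    v 1 ≠ 0 ∧ v = v 1 • Pinf := by
  have hx : v 0 = 0 := by simpa [C1, hz] using h1
  have hv' : v = v 1 • Pinf := by funext i; fin_cases i <;> simp [Pinf, hx, hz]
  refine ⟨fun hy => hv ?_, hv'⟩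
  rw [hv', hy, zero_smul]

lemma commonZerosExactly_C1_C2 : CommonZerosExactly C1 C2 [P2, P3, P4, P5, Pinf] := by
  refine ⟨fun w hw => ?_, fun v hv h1 h2 => ?_⟩
  · by_cases h : w = Pinf
    · subst h; simp [C1, C2, Pinf]
    · have hw' : IsTangencyPoint w := isTangencyPoint_iff.mpr (by simpa [h] using hw)
      exact ⟨hw'.eval_C1, hw'.eval_C2⟩
  · by_cases hz : v 2 = 0
    · obtain ⟨hy, hv'⟩ := eq_smul_Pinf hv hz h1
      exact ⟨v 1, hy, Pinf, by simp, hv'⟩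
    · obtain ⟨w, hw, hv'⟩ := exists_isTangencyPoint_eq_smul hz h1 h2
      refine ⟨_, div_ne_zero hz two_ne_zero, w, ?_, hv'⟩
      exact (List.sublist_append_left _ [Pinf]).subset (isTangencyPoint_iff.mp hw)

lemma linearIndependent_grad_Pinf : LinearIndependent ℂ ![grad C1 Pinf, grad C2 Pinf] := by
  have hg1 : grad C1 Pinf = ![0, 0, 1] := by rw [grad_C1]; simp [Pinf]
  have hg2 : grad C2 Pinf = ![-1, 0, 2] := by rw [grad_C2]; simp [Pinf]
  rw [hg1, hg2, LinearIndependent.pair_iff]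
  intro s t h
  have ht : t = 0 := by simpa using congrFun h 0
  have hst : s + t * 2 = 0 := by simpa using congrFun h 2
  exact ⟨by linear_combination hst - 2 * ht, ht⟩

/-- `C1·C2 = 2(P2+P3+P4+P5) + ∞`: the cubics meet exactly at
`P2, P3, P4, P5, ∞`; they are tangent at `P2, P3, P4, P5` and transversal at `∞`. -/
theorem OP_cubics_intersection :
    CommonZerosExactly C1 C2 [P2, P3, P4, P5, Pinf] ∧
    TangentAt C1 C2 P2 ∧ TangentAt C1 C2 P3 ∧
    TangentAt C1 C2 P4 ∧ TangentAt C1 C2 P5 ∧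
    LinearIndependent ℂ ![grad C1 Pinf, grad C2 Pinf] := by
  have tangent {w : Fin 3 → ℂ} (hw : w ∈ [P2, P3, P4, P5]) : TangentAt C1 C2 w :=
    (isTangencyPoint_iff.mpr hw).tangentAt
  exact ⟨commonZerosExactly_C1_C2, tangent (by simp), tangent (by simp), tangent (by simp),
    tangent (by simp), linearIndependent_grad_Pinf⟩
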